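/- For the Gaussian kernel k_σ(x,y) = exp(−(x−y)²/(2σ²)) on ℝ with fixed bandwidth σ > 0, and distributions P_i = N(0, i²), Q_i = N(0, 4i²), the population squared MMD γ²_{k_σ}(P_i, Q_i) = (1 + 2i²/σ²)^{−1/2} + (1 + 8i²/σ²)^{−1/2} − 2(1 + 5i²/σ²)^{−1/2} converges to 0 as i → ∞. -/

import Mathlib

/-!
Every term of the MMD is a Gaussian integral: completing the square shows that for independent
`X ~ N(μ₁, v₁)`, `Y ~ N(μ₂, v₂)` one has
`E exp (-(X - Y)² / (2σ²)) = (1 + (v₁ + v₂) / σ²) ^ (-1/2) * exp (-(μ₁ - μ₂)² / (2(σ² + v₁ + v₂)))`.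
With variances `i²` and `4i²` each of the three resulting terms is of order `σ / i`, so the MMD
vanishes although the two distributions stay apart.
-/

open MeasureTheory ProbabilityTheory Filter

/-- Gaussian kernel of bandwidth `σ` on `ℝ`. -/
noncomputable def gaussKer (σ : ℝ) (x y : ℝ) : ℝ :=
  Real.exp (-(x - y) ^ 2 / (2 * σ ^ 2))

/-- Population squared MMD between two measures on `ℝ` for a kernel `k`. -/
noncomputable def popMMD (k : ℝ → ℝ → ℝ) (P Q : Measure ℝ) : ℝ :=
  (∫ x, ∫ x', k x x' ∂P ∂P) + (∫ y, ∫ y', k y y' ∂Q ∂Q)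
    - 2 * ∫ x, ∫ y, k x y ∂Q ∂P

open Real
open scoped NNReal

lemma exp_neg_sq_div_mul_exp_neg_sq_div {a c : ℝ} (ha : 0 < a) (hc : 0 < c) (μ m y : ℝ) :
    exp (-(y - μ) ^ 2 / (2 * a)) * exp (-(y - m) ^ 2 / (2 * c)) =
      exp (-(m - μ) ^ 2 / (2 * (c + a))) *
        exp (-((c + a) / (2 * a * c)) * (y - (c * μ + a * m) / (c + a)) ^ 2) := by
  rw [← exp_add, ← exp_add]
  congr 1
  field_simp
  ring

lemma integral_exp_neg_sq_div_gaussianReal {c : ℝ} (hc : 0 < c) (μ : ℝ) (v : ℝ≥0) (m : ℝ) :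
    ∫ y, exp (-(y - m) ^ 2 / (2 * c)) ∂gaussianReal μ v =
      √(c / (c + v)) * exp (-(m - μ) ^ 2 / (2 * (c + v))) := by
  rcases eq_zero_or_pos v with rfl | hv
  · simp [gaussianReal_zero_var, hc.ne']
    ring
  have h_gauss : ∫ y, exp (-((c + v) / (2 * v * c)) * (y - (c * μ + v * m) / (c + v)) ^ 2) =
      √(2 * π * v) * √(c / (c + v)) := by
    rw [integral_sub_right_eq_self (fun y ↦ exp (-((c + v) / (2 * v * c)) * y ^ 2)),
      integral_gaussian, ← sqrt_mul (by positivity)]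
    congr 1
    field_simp
  simp_rw [integral_gaussianReal_eq_integral_smul hv.ne', gaussianPDFReal_def, smul_eq_mul,
    mul_assoc, exp_neg_sq_div_mul_exp_neg_sq_div (NNReal.coe_pos.mpr hv) hc]
  rw [integral_const_mul, integral_const_mul, h_gauss, ← mul_assoc 2 π]
  field_simp

lemma integral_integral_gaussKer_gaussianReal {σ : ℝ} (hσ : σ ≠ 0) (μ₁ μ₂ : ℝ) (v₁ v₂ : ℝ≥0) :
    ∫ x, ∫ y, gaussKer σ x y ∂gaussianReal μ₂ v₂ ∂gaussianReal μ₁ v₁ =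
      √(σ ^ 2 / (σ ^ 2 + v₁ + v₂)) * exp (-(μ₁ - μ₂) ^ 2 / (2 * (σ ^ 2 + v₁ + v₂))) := by
  have hσ2 : 0 < σ ^ 2 := by positivity
  have h_inner (x : ℝ) : ∫ y, gaussKer σ x y ∂gaussianReal μ₂ v₂ =
      √(σ ^ 2 / (σ ^ 2 + v₂)) * exp (-(x - μ₂) ^ 2 / (2 * (σ ^ 2 + v₂))) := by
    simp_rw [gaussKer, sub_sq_comm x]
    rw [sub_sq_comm μ₂]
    exact integral_exp_neg_sq_div_gaussianReal hσ2 μ₂ v₂ x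
  simp_rw [h_inner, integral_const_mul, sub_sq_comm μ₁]
  rw [integral_exp_neg_sq_div_gaussianReal (by positivity) μ₁ v₁ μ₂, ← mul_assoc,
    ← sqrt_mul (by positivity), add_right_comm (σ ^ 2) (v₂ : ℝ)]
  congr 2
  field_simp

lemma rpow_neg_one_half_one_add_div_sq {σ : ℝ} (hσ : σ ≠ 0) {s : ℝ} (hs : 0 ≤ s) :
    (1 + s / σ ^ 2) ^ (-(1 / 2 : ℝ)) = √(σ ^ 2 / (σ ^ 2 + s)) := by
  have h_base : 1 + s / σ ^ 2 = (σ ^ 2 / (σ ^ 2 + s))⁻¹ := by field_simp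
  rw [h_base, rpow_neg (by positivity), inv_rpow (by positivity), inv_inv, sqrt_eq_rpow]

lemma popMMD_gaussKer_gaussianReal {σ : ℝ} (hσ : σ ≠ 0) (μ₁ μ₂ : ℝ) (v₁ v₂ : ℝ≥0) :
    popMMD (gaussKer σ) (gaussianReal μ₁ v₁) (gaussianReal μ₂ v₂) =
      (1 + 2 * v₁ / σ ^ 2) ^ (-(1 / 2 : ℝ)) + (1 + 2 * v₂ / σ ^ 2) ^ (-(1 / 2 : ℝ))
        - 2 * (1 + (v₁ + v₂) / σ ^ 2) ^ (-(1 / 2 : ℝ))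
          * exp (-(μ₁ - μ₂) ^ 2 / (2 * (σ ^ 2 + v₁ + v₂))) := by
  simp only [popMMD, integral_integral_gaussKer_gaussianReal hσ, sub_self,
    zero_pow two_ne_zero, neg_zero, zero_div, exp_zero, mul_one]
  rw [rpow_neg_one_half_one_add_div_sq hσ (by positivity),
    rpow_neg_one_half_one_add_div_sq hσ (by positivity),
    rpow_neg_one_half_one_add_div_sq hσ (by positivity), mul_assoc]
  ring_nf

lemma tendsto_one_add_mul_sq_div_sq_atTop {σ c : ℝ} (hσ : σ ≠ 0) (hc : 0 < c) :
    Tendsto (fun x : ℝ ↦ 1 + c * x ^ 2 / σ ^ 2) atTop atTop :=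
  tendsto_atTop_add_const_left _ 1 <|
    ((tendsto_pow_atTop two_ne_zero).const_mul_atTop hc).atTop_div_const (by positivity)

/-- For the fixed-bandwidth Gaussian kernel, the population squared MMD between
`N(0, i²)` and `N(0, 4i²)`, which equals
`(1 + 2i²/σ²)^{−1/2} + (1 + 8i²/σ²)^{−1/2} − 2(1 + 5i²/σ²)^{−1/2}`,
converges to `0` as `i → ∞`. -/
theorem mmd_fixed_bandwidth_vanishes (σ : ℝ) (hσ : 0 < σ) :
    (∀ i : ℕ,
        popMMD (gaussKer σ)
            (gaussianReal 0 ⟨(i : ℝ) ^ 2, sq_nonneg _⟩)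
            (gaussianReal 0 ⟨4 * (i : ℝ) ^ 2, by positivity⟩)
          = (1 + 2 * (i : ℝ) ^ 2 / σ ^ 2) ^ (-(1 / 2 : ℝ))
            + (1 + 8 * (i : ℝ) ^ 2 / σ ^ 2) ^ (-(1 / 2 : ℝ))
            - 2 * (1 + 5 * (i : ℝ) ^ 2 / σ ^ 2) ^ (-(1 / 2 : ℝ))) ∧
      Tendsto
        (fun i : ℕ =>
          popMMD (gaussKer σ)
            (gaussianReal 0 ⟨(i : ℝ) ^ 2, sq_nonneg _⟩)
            (gaussianReal 0 ⟨4 * (i : ℝ) ^ 2, by positivity⟩))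
        atTop (nhds 0) := by
  have h_formula (i : ℕ) :
      popMMD (gaussKer σ)
          (gaussianReal 0 ⟨(i : ℝ) ^ 2, sq_nonneg _⟩)
          (gaussianReal 0 ⟨4 * (i : ℝ) ^ 2, by positivity⟩)
        = (1 + 2 * (i : ℝ) ^ 2 / σ ^ 2) ^ (-(1 / 2 : ℝ))
          + (1 + 8 * (i : ℝ) ^ 2 / σ ^ 2) ^ (-(1 / 2 : ℝ))
          - 2 * (1 + 5 * (i : ℝ) ^ 2 / σ ^ 2) ^ (-(1 / 2 : ℝ)) := by
    refine (popMMD_gaussKer_gaussianReal hσ.ne' 0 0 _ _).trans ?_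
    -- the variances are built with `Subtype.mk`, not `NNReal.mk`, so `NNReal.coe_mk` does not fire
    dsimp only [NNReal.toReal]
    simp only [sub_self, zero_pow two_ne_zero, neg_zero, zero_div, exp_zero, mul_one]
    ring_nf
  refine ⟨h_formula, ?_⟩
  have h_term (c : ℝ) (hc : 0 < c) :
      Tendsto (fun i : ℕ ↦ (1 + c * (i : ℝ) ^ 2 / σ ^ 2) ^ (-(1 / 2 : ℝ))) atTop (nhds 0) :=
    (tendsto_rpow_neg_atTop one_half_pos).comp <|
      (tendsto_one_add_mul_sq_div_sq_atTop hσ.ne' hc).comp tendsto_natCast_atTop_atTop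
  simp_rw [h_formula]
  simpa only [add_zero, mul_zero, sub_zero] using
    ((h_term 2 two_pos).add (h_term 8 (by norm_num))).sub ((h_term 5 (by norm_num)).const_mul 2)
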